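/- Let N, t be positive integers with t ≥ 2, let G be a K_t-free graph, let ℓ ≥ 3, and let q be the probability that t i.i.d. uniform vertices of G form an independent set. Suppose C(N,t) · q^{ℓ-2} · 2^{1-C(t,2)} < 1, where C(n,k) denotes the binomial coefficient. Then there exists an ℓ-coloring of the edges of K_N with no monochromatic K_t; in particular r(t;ℓ) > N. -/

import Mathlib

open Filter

/-- Probability that `t` i.i.d. uniform vertices of `G` (with repetition) form an independent
set: the fraction of functions `Fin t → V` whose image is independent in `G`. -/
noncomputable def indepProb (t : ℕ) {V : Type} [Fintype V] (G : SimpleGraph V) : ℝ :=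
  (Nat.card {f : Fin t → V // ∀ i j, ¬ G.Adj (f i) (f j)} : ℝ) / (Fintype.card V : ℝ) ^ t

/-- `c_{t,t}`: the infimum over all (nonempty, finite) `K_t`-free graphs of the probability that
`t` i.i.d. uniform vertices form an independent set. -/
noncomputable def cParam (t : ℕ) : ℝ :=
  sInf { q : ℝ | ∃ M : ℕ, 0 < M ∧ ∃ G : SimpleGraph (Fin M), G.CliqueFree t ∧ q = indepProb t G }

/-- Every `ℓ`-coloring of the edges of `K_N` has a monochromatic `K_t`. -/
def ramseyProp (N t ℓ : ℕ) : Prop :=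
  ∀ c : Sym2 (Fin N) → Fin ℓ, ∃ i : Fin ℓ, ∃ S : Finset (Fin N), S.card = t ∧
    ∀ x ∈ S, ∀ y ∈ S, x ≠ y → c s(x, y) = i

/-- The multicolor Ramsey number `r(t; ℓ)`. -/
noncomputable def multiRamsey (t ℓ : ℕ) : ℕ := sInf {N | ramseyProp N t ℓ}

/-!
Colour an edge `xy` of `K_N` by the least `i < ℓ - 2` with `f_i x ~ f_i y` in `G`, and by one of
two spare colours at random otherwise. A monochromatic `K_t` in colour `i` is mapped injectively
onto a `K_t` of `G` by `f_i`, which is impossible. A monochromatic `K_t` in a spare colour is an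
independent set under every `f_i` (probability `q` for each) and is monochromatic for the random
two-colouring (probability `2^{1 - C(t,2)}`), so by the union bound over the `C(N,t)` vertex sets
some choice of the `f_i` and of the two-colouring avoids both. Ramsey's theorem makes `r(t;ℓ)`
finite, hence larger than `N`.
-/
open Finset

section Monochromatic

variable {α β κ : Type*}

def IsMonochromaticOn (c : Sym2 α → κ) (S : Finset α) (i : κ) : Prop :=
  ∀ x ∈ S, ∀ y ∈ S, x ≠ y → c s(x, y) = i

def HasMonochromaticClique (c : Sym2 α → κ) (t : ℕ) : Prop :=
  ∃ i, ∃ S : Finset α, S.card = t ∧ IsMonochromaticOn c S i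

lemma HasMonochromaticClique.of_comp_map (e : α ↪ β) {c : Sym2 β → κ} {t : ℕ}
    (h : HasMonochromaticClique (c ∘ Sym2.map e) t) : HasMonochromaticClique c t := by
  obtain ⟨i, S, hS, hmono⟩ := h
  refine ⟨i, S.map e, by rw [card_map, hS], ?_⟩
  simp only [IsMonochromaticOn, Finset.mem_map]
  rintro _ ⟨x, hx, rfl⟩ _ ⟨y, hy, rfl⟩ hxy
  simpa using hmono x hx y hy (ne_of_apply_ne e hxy)

lemma exists_monochromatic_chain [LinearOrder α] [Fintype κ] [Nonempty κ] (c : Sym2 α → κ) :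
    ∀ (m : ℕ) (A : Finset α), (Fintype.card κ + 1) ^ m ≤ A.card →
      ∃ T ⊆ A, T.card = m ∧ ∃ γ : α → κ, ∀ x ∈ T, ∀ y ∈ T, x < y → c s(x, y) = γ x := by
  classical
  intro m
  induction m with
  | zero => exact fun A _ => ⟨∅, empty_subset _, rfl, Classical.arbitrary _, by simp⟩
  | succ m ih =>
    intro A hA
    have hA0 : A.Nonempty := card_pos.mp (lt_of_lt_of_le (by positivity) hA)
    set v := A.min' hA0
    have hvA : v ∈ A := A.min'_mem hA0
    obtain ⟨i, -, hi⟩ : ∃ i ∈ (univ : Finset κ),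
        (Fintype.card κ + 1) ^ m ≤ ((A.erase v).filter fun y => c s(v, y) = i).card := by
      refine exists_le_card_fiber_of_mul_le_card_of_maps_to (fun _ _ => mem_univ _)
        univ_nonempty ?_
      have : 1 ≤ (Fintype.card κ + 1) ^ m := Nat.one_le_pow _ _ (by omega)
      rw [pow_succ, mul_add_one] at hA
      rw [card_erase_of_mem hvA, card_univ, mul_comm]
      omega
    obtain ⟨T, hTsub, hT, γ, hγ⟩ := ih _ hi
    have hTA : ∀ x ∈ T, x ∈ A ∧ x ≠ v ∧ c s(v, x) = i := fun x hx => by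
      have := hTsub hx
      simp only [mem_filter, mem_erase] at this
      exact ⟨this.1.2, this.1.1, this.2⟩
    have hvT : v ∉ T := fun h => (hTA v h).2.1 rfl
    refine ⟨insert v T, insert_subset hvA fun x hx => (hTA x hx).1,
      by rw [card_insert_of_notMem hvT, hT], Function.update γ v i, ?_⟩
    simp only [mem_insert]
    rintro x (rfl | hx) y (rfl | hy) hxy
    · exact absurd hxy (lt_irrefl _)
    · rw [Function.update_self]; exact (hTA y hy).2.2
    · exact absurd (A.min'_le x (hTA x hx).1) (not_le.mpr hxy)
    · rw [Function.update_of_ne (hTA x hx).2.1]; exact hγ x hx y hy hxy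

lemma hasMonochromaticClique_of_card_le [LinearOrder α] [Fintype α] [Fintype κ] [Nonempty κ]
    (c : Sym2 α → κ) {t : ℕ}
    (h : (Fintype.card κ + 1) ^ (Fintype.card κ * (t - 1) + 1) ≤ Fintype.card α) :
    HasMonochromaticClique c t := by
  classical
  obtain ⟨T, -, hT, γ, hγ⟩ := exists_monochromatic_chain c _ univ (by rwa [card_univ])
  -- pigeonhole: `card κ * (t - 1) + 1` chain elements, so `t` of them share the colour `γ`
  obtain ⟨i, -, hi⟩ : ∃ i ∈ (univ : Finset κ), t - 1 < (T.filter fun x => γ x = i).card :=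
    exists_lt_card_fiber_of_mul_lt_card_of_maps_to (fun _ _ => mem_univ _)
      (by rw [hT, card_univ]; exact Nat.lt_succ_self _)
  obtain ⟨S, hSsub, hS⟩ :=
    exists_subset_card_eq (show t ≤ (T.filter fun x => γ x = i).card by omega)
  refine ⟨i, S, hS, fun x hx y hy hxy => ?_⟩
  have hx' := mem_filter.mp (hSsub hx)
  have hy' := mem_filter.mp (hSsub hy)
  rcases hxy.lt_or_gt with h | h
  · rw [hγ x hx'.1 y hy'.1 h, hx'.2]
  · rw [Sym2.eq_swap, hγ y hy'.1 x hx'.1 h, hy'.2]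

end Monochromatic

lemma ramseyProp_pow (t ℓ : ℕ) (hℓ : 0 < ℓ) : ramseyProp ((ℓ + 1) ^ (ℓ * (t - 1) + 1)) t ℓ :=
  have : Nonempty (Fin ℓ) := ⟨⟨0, hℓ⟩⟩
  fun c => hasMonochromaticClique_of_card_le c (by simp)

lemma ramseyProp.mono {n n' t ℓ : ℕ} (h : n ≤ n') (hn : ramseyProp n t ℓ) :
    ramseyProp n' t ℓ :=
  fun _ => HasMonochromaticClique.of_comp_map (Fin.castLEEmb h) (hn _)

lemma lt_multiRamsey_of_not_ramseyProp {N t ℓ : ℕ} (hℓ : 0 < ℓ) (h : ¬ ramseyProp N t ℓ) :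
    N < multiRamsey t ℓ :=
  Nat.lt_of_succ_le <| le_csInf ⟨_, ramseyProp_pow t ℓ hℓ⟩ fun _ hn =>
    Nat.succ_le_of_lt <| lt_of_not_ge fun hle => h (hn.mono hle)

lemma SimpleGraph.cliqueFree_comap {V W : Type*} {G : SimpleGraph W} {n : ℕ} (f : V → W)
    (h : G.CliqueFree n) : (G.comap f).CliqueFree n := by
  classical
  intro S hS
  have hinj : Set.InjOn f S := fun x hx y hy hxy => by
    by_contra hne
    exact G.ne_of_adj (hS.isClique hx hy hne) hxy
  refine h (S.image f) ⟨?_, by rw [card_image_of_injOn hinj, hS.card_eq]⟩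
  rw [coe_image]
  rintro _ ⟨x, hx, rfl⟩ _ ⟨y, hy, rfl⟩ hxy
  exact hS.isClique hx hy (ne_of_apply_ne f hxy)

section HomColoring

variable {α V : Type*} {L : ℕ} (G : SimpleGraph V) (f : Fin L → α → V) (g : Sym2 α → Fin 2)

open Classical in
noncomputable def homColoring (e : Sym2 α) : Fin (L + 2) :=
  if h : ∃ i, e ∈ (G.comap (f i)).edgeSet then Fin.castAdd 2 (Fin.find _ h)
  else Fin.natAdd L (g e)

def IsBadSet (S : Finset α) : Prop :=
  (∀ i, (G.comap (f i)).IsIndepSet S) ∧ ∃ b, IsMonochromaticOn g S b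

variable {G f g}

lemma mem_edgeSet_of_homColoring_eq_castAdd {e : Sym2 α} {i : Fin L}
    (h : homColoring G f g e = Fin.castAdd 2 i) : e ∈ (G.comap (f i)).edgeSet := by
  classical
  unfold homColoring at h
  split_ifs at h with he
  · exact Fin.castAdd_injective L 2 h ▸ Fin.find_spec he
  · have := congrArg Fin.val h
    simp only [Fin.val_castAdd, Fin.val_natAdd] at this
    omega

lemma homColoring_eq_natAdd {e : Sym2 α} {b : Fin 2}
    (h : homColoring G f g e = Fin.natAdd L b) :
    (∀ i, e ∉ (G.comap (f i)).edgeSet) ∧ g e = b := by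
  unfold homColoring at h
  split_ifs at h with he
  · have := congrArg Fin.val h
    simp only [Fin.val_castAdd, Fin.val_natAdd] at this
    omega
  · exact ⟨not_exists.mp he, (Fin.natAdd_inj L).mp h⟩

lemma not_hasMonochromaticClique_homColoring {t : ℕ} (hG : G.CliqueFree t)
    (hgood : ∀ S : Finset α, S.card = t → ¬ IsBadSet G f g S) :
    ¬ HasMonochromaticClique (homColoring G f g) t := by
  rintro ⟨i, S, hS, hmono⟩
  induction i using Fin.addCases with
  | left i =>
    exact SimpleGraph.cliqueFree_comap (f i) hG S
      ⟨fun x hx y hy hxy => mem_edgeSet_of_homColoring_eq_castAdd (hmono x hx y hy hxy), hS⟩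
  | right b =>
    have hcol := fun x hx y hy hxy => homColoring_eq_natAdd (hmono x hx y hy hxy)
    exact hgood S hS ⟨fun i x hx y hy hxy => (hcol x hx y hy hxy).1 i,
      b, fun x hx y hy hxy => (hcol x hx y hy hxy).2⟩

end HomColoring

section Counting

variable {α β γ : Type*} [Finite α] [Finite γ]

lemma natCard_subtype_comp_embedding_mul (e : γ ↪ α) (P : (γ → β) → Prop) :
    Nat.card {h : α → β // P (h ∘ e)} * Nat.card β ^ Nat.card γ =
      Nat.card {u : γ → β // P u} * Nat.card β ^ Nat.card α := by
  classical
  let C := {x // x ∉ Set.range e}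
  let ε : γ ⊕ C ≃ α :=
    (Equiv.sumCongr (Equiv.ofInjective e e.injective) (Equiv.refl C)).trans
      (Equiv.sumCompl (· ∈ Set.range e))
  let restrict : (α → β) ≃ (γ → β) × (C → β) :=
    (Equiv.arrowCongr ε.symm (Equiv.refl β)).trans (Equiv.sumArrowEquivProdArrow _ _ _)
  have hsplit : {h : α → β // P (h ∘ e)} ≃ {u : γ → β // P u} × (C → β) :=
    (restrict.subtypeEquiv fun _ => Iff.rfl).trans Equiv.prodSubtypeFstEquivSubtypeProd
  have hα : Nat.card γ + Nat.card C = Nat.card α := by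
    rw [← Nat.card_sum, Nat.card_congr ε]
  rw [Nat.card_congr hsplit, Nat.card_prod, Nat.card_fun, ← hα, pow_add]
  ring

lemma natCard_exists_isMonochromaticOn_mul_le [Finite β] (S : Finset α) :
    Nat.card {g : Sym2 α → β // ∃ b, IsMonochromaticOn g S b} * Nat.card β ^ S.card.choose 2 ≤
      Nat.card β * Nat.card β ^ Nat.card (Sym2 α) := by
  classical
  let e : {z : Sym2 S // ¬ z.IsDiag} ↪ Sym2 α :=
    ⟨fun z => z.1.map Subtype.val, (Sym2.map.injective Subtype.val_injective).comp
      Subtype.val_injective⟩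
  have hmono : ∀ g : Sym2 α → β,
      (∃ b, IsMonochromaticOn g S b) ↔ ∃ b, ∀ z, (g ∘ e) z = b := by
    refine fun g => exists_congr fun b => ⟨fun hb => ?_, fun hb x hx y hy hxy => ?_⟩
    · rintro ⟨z, hz⟩
      induction z using Sym2.ind with
      | h x y =>
        exact hb x x.2 y y.2 fun hxy => hz (Sym2.mk_isDiag_iff.mpr (Subtype.ext hxy))
    · exact hb ⟨s(⟨x, hx⟩, ⟨y, hy⟩), by simpa using hxy⟩
  have hconst : Nat.card {u : {z : Sym2 S // ¬ z.IsDiag} → β // ∃ b, ∀ z, u z = b} ≤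
      Nat.card β :=
    Nat.card_le_card_of_surjective (fun b => ⟨fun _ => b, b, fun _ => rfl⟩)
      fun ⟨u, b, hb⟩ => ⟨b, Subtype.ext (funext hb).symm⟩
  have hedges : Nat.card {z : Sym2 S // ¬ z.IsDiag} = S.card.choose 2 := by
    rw [Nat.card_eq_fintype_card, Sym2.card_subtype_not_diag, Fintype.card_coe]
  have key := natCard_subtype_comp_embedding_mul e (fun u => ∃ b, ∀ z, u z = b) (β := β)
  rw [hedges] at key
  rw [Nat.card_congr (Equiv.subtypeEquivRight hmono), key]
  exact Nat.mul_le_mul_right _ hconst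

end Counting

lemma exists_forall_not_of_sum_natCard_lt {Ω ι : Type*} (s : Finset ι) (B : ι → Ω → Prop)
    (h : ∑ i ∈ s, Nat.card {ω // B i ω} < Nat.card Ω) : ∃ ω, ∀ i ∈ s, ¬ B i ω := by
  by_contra! hall
  refine h.not_ge ?_
  calc Nat.card Ω = (⋃ i ∈ s, {ω | B i ω}).ncard := by
        rw [← Set.ncard_univ]
        congr
        ext ω
        simpa using hall ω
    _ ≤ _ := s.set_ncard_biUnion_le _

section RandomHomomorphism

variable {α : Type*} {V : Type} [Fintype α] [Fintype V] [Nonempty V] (G : SimpleGraph V)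

lemma natCard_isIndepSet_comap (S : Finset α) :
    (Nat.card {h : α → V // (G.comap h).IsIndepSet S} : ℝ) =
      indepProb S.card G * Fintype.card V ^ Fintype.card α := by
  have hindep : ∀ h : α → V, (G.comap h).IsIndepSet S ↔ ∀ a b : S, ¬ G.Adj (h a) (h b) := by
    refine fun h => ⟨fun hS a b hab => ?_, fun hS x hx y hy _ => hS ⟨x, hx⟩ ⟨y, hy⟩⟩
    rcases eq_or_ne a.1 b.1 with hab' | hab'
    · exact G.irrefl (hab' ▸ hab)
    · exact hS a.2 b.2 hab' hab
  have hS : Nat.card {u : S → V // ∀ a b, ¬ G.Adj (u a) (u b)} =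
      Nat.card {f : Fin S.card → V // ∀ i j, ¬ G.Adj (f i) (f j)} :=
    Nat.card_congr <| (Equiv.arrowCongr S.equivFin (Equiv.refl V)).subtypeEquiv fun u =>
      ⟨fun hu i j => hu _ _, fun hu a b => by simpa using hu (S.equivFin a) (S.equivFin b)⟩
  have key := natCard_subtype_comp_embedding_mul (Function.Embedding.subtype (· ∈ S))
    (fun u : S → V => ∀ a b, ¬ G.Adj (u a) (u b))
  rw [hS] at key
  simp only [Nat.card_eq_finsetCard, Nat.card_eq_fintype_card (α := V),
    Nat.card_eq_fintype_card (α := α)] at key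
  have hV : (Fintype.card V : ℝ) ^ S.card ≠ 0 := by positivity
  rw [Nat.card_congr (Equiv.subtypeEquivRight hindep), indepProb, div_mul_eq_mul_div,
    eq_div_iff hV]
  exact_mod_cast key

lemma natCard_isBadSet_le (L : ℕ) (S : Finset α) :
    (Nat.card {ω : (Fin L → α → V) × (Sym2 α → Fin 2) // IsBadSet G ω.1 ω.2 S} : ℝ) ≤
      indepProb S.card G ^ L * 2 ^ (1 - (S.card.choose 2 : ℤ)) *
        Nat.card ((Fin L → α → V) × (Sym2 α → Fin 2)) := by
  have hsplit : {ω : (Fin L → α → V) × (Sym2 α → Fin 2) // IsBadSet G ω.1 ω.2 S} ≃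
      (Fin L → {h : α → V // (G.comap h).IsIndepSet S}) ×
        {g : Sym2 α → Fin 2 // ∃ b, IsMonochromaticOn g S b} :=
    (Equiv.subtypeProdEquivProd (p := fun f : Fin L → α → V => ∀ i, (G.comap (f i)).IsIndepSet S)
      (q := fun g => ∃ b, IsMonochromaticOn g S b)).trans
      (Equiv.prodCongr (Equiv.subtypePiEquivPi (β := fun _ : Fin L => α → V)
        (p := fun _ (h : α → V) => (G.comap h).IsIndepSet (S : Set α)))
        (Equiv.refl _))
  have hmono : (Nat.card {g : Sym2 α → Fin 2 // ∃ b, IsMonochromaticOn g S b} : ℝ) ≤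
      2 ^ (1 - (S.card.choose 2 : ℤ)) * 2 ^ Nat.card (Sym2 α) := by
    rw [zpow_sub₀ two_ne_zero, zpow_one, zpow_natCast, div_mul_eq_mul_div,
      le_div_iff₀ (by positivity)]
    have := natCard_exists_isMonochromaticOn_mul_le (β := Fin 2) S
    rw [Nat.card_eq_fintype_card (α := Fin 2), Fintype.card_fin] at this
    exact_mod_cast this
  have hpos : 0 ≤ indepProb S.card G ^ L * ((Fintype.card V : ℝ) ^ Fintype.card α) ^ L := by
    unfold indepProb; positivity
  rw [Nat.card_congr hsplit]
  simp only [Nat.card_prod, Nat.card_fun, Nat.card_eq_fintype_card (α := Fin L),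
    Fintype.card_fin, Nat.cast_mul, Nat.cast_pow, natCard_isIndepSet_comap,
    Nat.card_eq_fintype_card (α := Fin 2), Nat.card_eq_fintype_card (α := α),
    Nat.card_eq_fintype_card (α := V)]
  push_cast
  linear_combination mul_le_mul_of_nonneg_left hmono hpos

lemma exists_forall_not_isBadSet (t L : ℕ)
    (h : ((Fintype.card α).choose t : ℝ) * indepProb t G ^ L * 2 ^ (1 - (t.choose 2 : ℤ)) < 1) :
    ∃ (f : Fin L → α → V) (g : Sym2 α → Fin 2), ∀ S : Finset α, S.card = t →
      ¬ IsBadSet G f g S := by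
  let Ω := (Fin L → α → V) × (Sym2 α → Fin 2)
  have hΩ : (0 : ℝ) < Nat.card Ω := by exact_mod_cast Nat.card_pos
  obtain ⟨⟨f, g⟩, hω⟩ := exists_forall_not_of_sum_natCard_lt (powersetCard t univ)
    (fun S (ω : Ω) => IsBadSet G ω.1 ω.2 S) <| by
      rw [← Nat.cast_lt (α := ℝ), Nat.cast_sum]
      calc _ ≤ ∑ _ ∈ powersetCard t univ,
              indepProb t G ^ L * 2 ^ (1 - (t.choose 2 : ℤ)) * (Nat.card Ω : ℝ) :=
            sum_le_sum fun S hS => (mem_powersetCard.mp hS).2 ▸ natCard_isBadSet_le G L S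
        _ = (Fintype.card α).choose t * indepProb t G ^ L * 2 ^ (1 - (t.choose 2 : ℤ)) *
              Nat.card Ω := by
            rw [sum_const, card_powersetCard, card_univ, nsmul_eq_mul, ← mul_assoc, ← mul_assoc]
        _ < Nat.card Ω := mul_lt_of_lt_one_left hΩ h
  exact ⟨f, g, fun S hS => hω S (mem_powersetCard.mpr ⟨subset_univ S, hS⟩)⟩

end RandomHomomorphism

theorem random_hom_argument_general (N t ℓ : ℕ) (hℓ : 3 ≤ ℓ)
    (M : ℕ) (hM : 0 < M) (G : SimpleGraph (Fin M)) (hG : G.CliqueFree t)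
    (q : ℝ) (hq : q = indepProb t G)
    (h : (N.choose t : ℝ) * q ^ (ℓ - 2) * (2 : ℝ) ^ ((1 : ℤ) - (t.choose 2 : ℤ)) < 1) :
    (∃ c : Sym2 (Fin N) → Fin ℓ,
      ¬ ∃ i : Fin ℓ, ∃ S : Finset (Fin N), S.card = t ∧
          ∀ x ∈ S, ∀ y ∈ S, x ≠ y → c s(x, y) = i) ∧
    N < multiRamsey t ℓ := by
  obtain ⟨L, rfl⟩ : ∃ L, ℓ = L + 2 := ⟨ℓ - 2, by omega⟩
  have : Nonempty (Fin M) := ⟨⟨0, hM⟩⟩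
  obtain ⟨f, g, hgood⟩ := exists_forall_not_isBadSet (α := Fin N) G t L
    (by simpa [hq] using h)
  have hc := not_hasMonochromaticClique_homColoring hG hgood
  exact ⟨⟨_, hc⟩, lt_multiRamsey_of_not_ramseyProp (by omega) fun hR => hc (hR _)⟩

/-- The random homomorphism argument: if `C(N,t)·q^{ℓ-2}·2^{1-C(t,2)} < 1` where `q` is the
probability that `t` i.i.d. uniform vertices of a `K_t`-free graph `G` are independent, then
there is an `ℓ`-coloring of `K_N` with no monochromatic `K_t`; in particular `r(t;ℓ) > N`. -/
theorem random_hom_argument (N t ℓ : ℕ) (hN : 0 < N) (ht : 2 ≤ t) (hℓ : 3 ≤ ℓ)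
    (M : ℕ) (hM : 0 < M) (G : SimpleGraph (Fin M)) (hG : G.CliqueFree t)
    (q : ℝ) (hq : q = indepProb t G)
    (h : (N.choose t : ℝ) * q ^ (ℓ - 2) * (2 : ℝ) ^ ((1 : ℤ) - (t.choose 2 : ℤ)) < 1) :
    (∃ c : Sym2 (Fin N) → Fin ℓ,
      ¬ ∃ i : Fin ℓ, ∃ S : Finset (Fin N), S.card = t ∧
          ∀ x ∈ S, ∀ y ∈ S, x ≠ y → c s(x, y) = i) ∧
    N < multiRamsey t ℓ :=
  random_hom_argument_general N t ℓ hℓ M hM G hG q hq h
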